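/- arXiv:1005.1754 — 4 statements merged into one kernel-verified Lean document; each statement's English description precedes it below -/
import Mathlib

section
/- Let R be a Noetherian commutative ring, X a saturated subset of Spec R, and M an Artinian R-module. Then an element x ∈ R is an M-filter co-regular element with respect to X (i.e., Cos_R(M/xM) ⊆ X) if and only if x lies outside the union of the primes in Att_R M − X, i.e., x ∈ R − ⋃_{p ∈ Att_R M − X} p. -/
open CategoryTheory

universe u

noncomputable section

variable (R : Type u) [CommRing R]

/-- The co-support of a module `M`: the set of primes `p` of `R` such that the
co-localization `Hom_R(R_p, M)` is nonzero. -/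
def cosupport (M : Type u) [AddCommGroup M] [Module R M] : Set (PrimeSpectrum R) :=
  { p | ∃ f : Localization.AtPrime p.asIdeal →ₗ[R] M, f ≠ 0 }

/-- A saturated subset of `Spec R`: if `p ∈ X` then `V(p) ⊆ X`.
(The empty set vacuously satisfies this.) -/
def IsSaturatedSet (X : Set (PrimeSpectrum R)) : Prop :=
  ∀ p ∈ X, ∀ q : PrimeSpectrum R, p.asIdeal ≤ q.asIdeal → q ∈ X

/-- The `S`-module structure on the co-localization `Hom_R(S, M)`, given by
multiplication in the domain: `(s • f) t = f (s * t)`. -/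
instance colocModule (S : Type u) [CommRing S] [Algebra R S]
    (M : Type u) [AddCommGroup M] [Module R M] : Module S (S →ₗ[R] M) where
  smul s f := f.comp (LinearMap.mulLeft R s)
  one_smul f := by ext x; show f (1 * x) = f x; rw [one_mul]
  mul_smul s t f := by ext x; show f ((s * t) * x) = f (t * (s * x)); rw [mul_assoc, mul_left_comm]
  smul_zero s := by ext x; show (0 : S →ₗ[R] M) (s * x) = (0 : S →ₗ[R] M) x; simp
  smul_add s f g := by ext x; show (f + g) (s * x) = f (s * x) + g (s * x); simp
  add_smul s t f := by ext x; show f ((s + t) * x) = f (s * x) + f (t * x); rw [add_mul, map_add]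
  zero_smul f := by ext x; show f (0 * x) = (0 : S →ₗ[R] M) x; simp

/-- `Tor_n^A(N, M)` as an object of `ModuleCat A`. -/
def TorMod (A : Type u) [CommRing A] (n : ℕ) (N M : Type u)
    [AddCommGroup N] [Module A N] [AddCommGroup M] [Module A M] : ModuleCat A :=
  ((Tor (ModuleCat.{u} A) n).obj (ModuleCat.of A N)).obj (ModuleCat.of A M)

/-- The residue field `k(p) = R_p / p R_p`. -/
def ResField (p : Ideal R) [p.IsPrime] : Type u :=
  Localization.AtPrime p ⧸ (p.map (algebraMap R (Localization.AtPrime p)))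

instance (p : Ideal R) [p.IsPrime] : AddCommGroup (ResField R p) :=
  inferInstanceAs (AddCommGroup
    (Localization.AtPrime p ⧸ (p.map (algebraMap R (Localization.AtPrime p)))))

instance (p : Ideal R) [p.IsPrime] : Module (Localization.AtPrime p) (ResField R p) :=
  inferInstanceAs (Module (Localization.AtPrime p)
    (Localization.AtPrime p ⧸ (p.map (algebraMap R (Localization.AtPrime p)))))

/-- The `i`-th dual Bass number of `M` at `p` is positive, i.e.
`π_i(p, M) = dim_{k(p)} Tor_i^{R_p}(k(p), Hom_R(R_p, M)) > 0`. -/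
def DualBassPos (p : Ideal R) [p.IsPrime] (M : Type u) [AddCommGroup M] [Module R M]
    (i : ℕ) : Prop :=
  Nontrivial (TorMod (Localization.AtPrime p) i (ResField R p)
    (Localization.AtPrime p →ₗ[R] M))

/-- `Cograde_{R_p}(I, Hom_R(R_p, M)) = inf { i | Tor_i^{R_p}(R_p/I, Hom_R(R_p, M)) ≠ 0 }`. -/
def cogradeLoc (p : Ideal R) [p.IsPrime] (I : Ideal (Localization.AtPrime p))
    (M : Type u) [AddCommGroup M] [Module R M] : ℕ∞ :=
  sInf { n : ℕ∞ | ∃ i : ℕ, n = i ∧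
    Nontrivial (TorMod (Localization.AtPrime p) i (Localization.AtPrime p ⧸ I)
      (Localization.AtPrime p →ₗ[R] M)) }

/-- `Cograde_{R_p} Hom_R(R_p, M)`, the cograde with respect to `p R_p`. -/
def cogradeP (p : Ideal R) [p.IsPrime] (M : Type u) [AddCommGroup M] [Module R M] : ℕ∞ :=
  cogradeLoc R p (p.map (algebraMap R (Localization.AtPrime p))) M

/-- `Cograde_X(I, M) = inf { i | Cos_R(Tor_i^R(R/I, M)) ⊄ X }`. -/
def cogradeX (X : Set (PrimeSpectrum R)) (I : Ideal R)
    (M : Type u) [AddCommGroup M] [Module R M] : ℕ∞ :=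
  sInf { n : ℕ∞ | ∃ i : ℕ, n = i ∧ ¬ (cosupport R (TorMod R i (R ⧸ I) M) ⊆ X) }

/-- The flat dimension of an `A`-module `M`: the least `n` such that `Tor_i^A(N, M) = 0`
for all `i > n` and all `A`-modules `N` (and `∞` if there is no such `n`). -/
def flatDim (A : Type u) [CommRing A] (M : Type u) [AddCommGroup M] [Module A M] : ℕ∞ :=
  sInf { n : ℕ∞ | ∀ i : ℕ, n < (i : ℕ∞) →
    ∀ (N : Type u) (_ : AddCommGroup N) (_ : Module A N), Subsingleton (TorMod A i N M) }

/-- `x` is an `M`-filter co-regular sequence with respect to `X`: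
for each `i`, `Cos_R((0 :_M (x_0,…,x_{i-1})) / x_i (0 :_M (x_0,…,x_{i-1}))) ⊆ X`. -/
def IsFilterCoregSeq (X : Set (PrimeSpectrum R)) (M : Type u) [AddCommGroup M] [Module R M]
    {n : ℕ} (x : Fin n → R) : Prop :=
  ∀ i : Fin n,
    cosupport R
      ((Submodule.torsionBySet R M (x '' { j | j < i })) ⧸
        (Ideal.span {x i} •
          (⊤ : Submodule R (Submodule.torsionBySet R M (x '' { j | j < i }))))) ⊆ X

/-- `y` is an `N`-quasi co-regular sequence: multiplication by `y i` is a surjective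
endomorphism of `(0 :_N (y_0,…,y_{i-1}))` for each `i`. -/
def IsQuasiCoregSeq (S : Type u) [CommRing S] (N : Type u) [AddCommGroup N] [Module S N]
    {n : ℕ} (y : Fin n → S) : Prop :=
  ∀ i : Fin n, ∀ m ∈ Submodule.torsionBySet S N (y '' { j | j < i }),
    ∃ m' ∈ Submodule.torsionBySet S N (y '' { j | j < i }), y i • m' = m

/-- A submodule `N` of `M` is `p`-secondary: `N ≠ 0`, every `x : R` acts on `N` either
surjectively or nilpotently, and `p = √(Ann_R N)`. -/
def IsSecondary (p : Ideal R) {M : Type u} [AddCommGroup M] [Module R M]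
    (N : Submodule R M) : Prop :=
  N ≠ ⊥ ∧
  (∀ x : R, (∀ m ∈ N, ∃ m' ∈ N, x • m' = m) ∨ (∃ k : ℕ, ∀ m ∈ N, x ^ k • m = 0)) ∧
  p = N.annihilator.radical

/-- The attached primes of `M`: primes occurring in a minimal secondary representation
`M = N_1 + ⋯ + N_k` (the `N_i` being `q_i`-secondary with distinct `q_i`, no `N_i`
redundant). -/
def attachedPrimes (M : Type u) [AddCommGroup M] [Module R M] : Set (PrimeSpectrum R) :=
  { p | ∃ (k : ℕ) (N : Fin k → Submodule R M) (q : Fin k → Ideal R),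
      (⨆ i, N i) = ⊤ ∧ (∀ i, IsSecondary R (q i) (N i)) ∧ Function.Injective q ∧
      (∀ i : Fin k, (⨆ j ∈ { j | j ≠ i }, N j) ≠ ⊤) ∧ (∃ i, q i = p.asIdeal) }

/-- `Co-dim_{R_p} Hom_R(R_p, M) = sup { dim R_p/(q R_p) | q ∈ Cos_R M, q ⊆ p }`. -/
def colocCodim (p : Ideal R) [p.IsPrime] (M : Type u) [AddCommGroup M] [Module R M] :
    WithBot ℕ∞ :=
  sSup { d | ∃ q ∈ cosupport R M, q.asIdeal ≤ p ∧
    d = ringKrullDim ((Localization.AtPrime p) ⧸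
      (q.asIdeal.map (algebraMap R (Localization.AtPrime p)))) }

/-- `Co-dim_R M = sup { dim R/p | p ∈ Cos_R M }`. -/
def coDim (M : Type u) [AddCommGroup M] [Module R M] : WithBot ℕ∞ :=
  sSup { d | ∃ p ∈ cosupport R M, d = ringKrullDim (R ⧸ p.asIdeal) }

/-- A `U` ring: a Noetherian commutative ring such that for every Artinian module `M`
and every prime `p ⊇ Ann_R M`, one has `Ann_R(0 :_M p) = p`. -/
def IsURing : Prop :=
  IsNoetherianRing R ∧
  ∀ (M : Type u) (_ : AddCommGroup M) (_ : Module R M), IsArtinian R M →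
    ∀ p : Ideal R, p.IsPrime → (⊤ : Submodule R M).annihilator ≤ p →
      (Submodule.torsionBySet R M (p : Set R)).annihilator = p

/-- `ht(p/q)`: the supremum of lengths of chains of primes from `q` up to `p`. -/
def relHeight (q p : Ideal R) : ℕ∞ :=
  sSup { n : ℕ∞ | ∃ m : ℕ, n = m ∧ ∃ c : Fin (m + 1) → PrimeSpectrum R,
    StrictMono c ∧ (c 0).asIdeal = q ∧ (c (Fin.last m)).asIdeal = p }

/-- `M` is a cotorsion module: `Ext^1_R(F, M) = 0` for every flat module `F`. -/
def IsCotorsion (M : Type u) [AddCommGroup M] [Module R M] : Prop :=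
  ∀ (G : Type u) (_ : AddCommGroup G) (_ : Module R G), Module.Flat R G →
    Subsingleton (((Ext R (ModuleCat.{u} R) 1).obj
      (Opposite.op (ModuleCat.of R G))).obj (ModuleCat.of R M))

end

/-!
Write `M = N₁ + ⋯ + Nₖ` as a minimal secondary representation with `pᵢ = √(Ann Nᵢ)`.
If `x ∈ pⱼ`, then `x` is nilpotent on `Nⱼ`, so minimality forbids `Nⱼ ⊆ xM`. The image of `Nⱼ`
in `M/xM` is then a nonzero Artinian module on which every `s ∉ pⱼ` acts surjectively, and such
a module receives a nonzero map from `R_{pⱼ}`; hence `pⱼ ∈ Cos(M/xM)`. Conversely, a component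
with `x ∉ pᵢ` lies in `xM`, so `Ann(M/xM)` contains the product of the `Ann Nᵢ` with `x ∈ pᵢ`.
A prime of `Cos(M/xM)` contains `Ann(M/xM)`, hence one of these `pᵢ`. Saturation of `X` then
gives both implications.
-/

open scoped Pointwise

section LinearCompactness

variable {R N : Type*} [CommRing R] [AddCommGroup N] [Module R N]

lemma AffineSubspace.mem_smul_iff {r : R} {s : AffineSubspace R N} {y : N} :
    y ∈ r • s ↔ ∃ z ∈ s, r • z = y := by
  rw [← SetLike.mem_coe, AffineSubspace.coe_smul, Set.mem_smul_set]
  rfl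

variable (R) in
def smulFiber (r : R) (x : N) : AffineSubspace R N :=
  (affineSpan R {x}).comap (DistribSMul.toLinearMap R N r).toAffineMap

lemma mem_smulFiber {r : R} {x z : N} : z ∈ smulFiber R r x ↔ r • z = x := by
  simp [smulFiber, AffineSubspace.mem_comap, AffineSubspace.mem_affineSpan_singleton]

theorem IsArtinian.exists_iInf_eq_of_directed [IsArtinian R N] {ι : Type*} [Nonempty ι]
    (A : ι → AffineSubspace R N) (hne : ∀ i, (A i : Set N).Nonempty)
    (hdir : Directed (· ≥ ·) A) : ∃ i, ⨅ j, A j = A i := by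
  obtain ⟨_, ⟨i, rfl⟩, hmin⟩ :=
    IsArtinian.set_has_minimal (Set.range fun i => (A i).direction) (Set.range_nonempty _)
  refine ⟨i, le_antisymm (iInf_le _ i) (le_iInf fun j => ?_)⟩
  obtain ⟨k, hki, hkj⟩ := hdir i j
  have hdirection : (A k).direction = (A i).direction :=
    (AffineSubspace.direction_le hki).eq_of_not_lt (hmin _ ⟨k, rfl⟩)
  rwa [← AffineSubspace.eq_of_direction_eq_of_nonempty_of_le hdirection (hne k) hki]

end LinearCompactness

section DivisionSystem

variable {R N Λ : Type*} [CommRing R] [AddCommGroup N] [Module R N] [CommMonoid Λ]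
  (P : Λ →* R)

/-- `C a` is a nonempty coset of candidates for the value at `a` of a family `g` with
`P b • g (a * b) = g a`. Artinian modules are linearly compact (`exists_iInf_eq_of_directed`), so
Zorn's lemma yields minimal systems, and their cosets are singletons. -/
def IsDivisionSystem (C : Λ → AffineSubspace R N) : Prop :=
  (∀ a, (C a : Set N).Nonempty) ∧ ∀ a b, ∀ y ∈ C (a * b), P b • y ∈ C a

variable {P} [IsArtinian R N]

theorem IsDivisionSystem.exists_minimal_le {C₀ : Λ → AffineSubspace R N}
    (h₀ : IsDivisionSystem P C₀) : ∃ C ≤ C₀, Minimal (IsDivisionSystem P) C := by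
  suffices hchain : ∀ c ⊆ {C | IsDivisionSystem P (OrderDual.ofDual C)}, IsChain (· ≤ ·) c →
      ∀ D ∈ c, ∃ lb ∈ {C | IsDivisionSystem P (OrderDual.ofDual C)}, ∀ E ∈ c, E ≤ lb by
    obtain ⟨C, hC₀, hC⟩ := zorn_le_nonempty₀ (α := (Λ → AffineSubspace R N)ᵒᵈ) _ hchain C₀ h₀
    exact ⟨C, hC₀, hC⟩
  intro c hc hchain D hD
  have : Nonempty c := ⟨⟨D, hD⟩⟩
  have hinf (a : Λ) : ∃ E : c, ⨅ F : c, OrderDual.ofDual F.1 a = OrderDual.ofDual E.1 a :=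
    IsArtinian.exists_iInf_eq_of_directed _ (fun E => (hc E.2).1 a) <| by
      rintro E F
      rcases hchain.total E.2 F.2 with hEF | hFE
      · exact ⟨F, hEF a, le_rfl⟩
      · exact ⟨E, le_rfl, hFE a⟩
  refine ⟨OrderDual.toDual fun a => ⨅ F : c, OrderDual.ofDual F.1 a, ⟨fun a => ?_, ?_⟩,
    fun E hE a => iInf_le (fun F : c => OrderDual.ofDual F.1 a) ⟨E, hE⟩⟩
  · obtain ⟨E, hE⟩ := hinf a
    simpa [hE] using (hc E.2).1 a
  · intro a b y hy
    simp only [OrderDual.ofDual_toDual, AffineSubspace.mem_iInf_iff] at hy ⊢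
    exact fun F => (hc F.2).2 a b y (hy F)

theorem IsDivisionSystem.exists_smul_eq_of_minimal {C : Λ → AffineSubspace R N}
    (hC : Minimal (IsDivisionSystem P) C) (a b : Λ) {y : N} (hy : y ∈ C a) :
    ∃ z ∈ C (a * b), P b • z = y := by
  have hmono (a b₁ b₂ : Λ) : P (b₁ * b₂) • C (a * (b₁ * b₂)) ≤ P b₁ • C (a * b₁) := by
    intro y hy
    obtain ⟨z, hz, rfl⟩ := AffineSubspace.mem_smul_iff.mp hy
    refine AffineSubspace.mem_smul_iff.mpr ⟨P b₂ • z, hC.prop.2 _ _ _ ?_, ?_⟩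
    · rwa [← mul_assoc] at hz
    · rw [smul_smul, ← map_mul]
  have hinf (a : Λ) : ∃ b₀, ⨅ b, P b • C (a * b) = P b₀ • C (a * b₀) :=
    IsArtinian.exists_iInf_eq_of_directed _
      (fun b => ((hC.prop.1 _).image _).mono (AffineSubspace.coe_smul _ _).ge)
      fun b₁ b₂ => ⟨b₁ * b₂, hmono a b₁ b₂, mul_comm b₁ b₂ ▸ hmono a b₂ b₁⟩
  have hD : IsDivisionSystem P fun a => ⨅ b, P b • C (a * b) := by
    refine ⟨fun a => ?_, fun a b y hy => ?_⟩
    · obtain ⟨b₀, hb₀⟩ := hinf a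
      dsimp only
      rw [hb₀, AffineSubspace.coe_smul]
      exact (hC.prop.1 _).image _
    · simp only [AffineSubspace.mem_iInf_iff] at hy ⊢
      intro c
      obtain ⟨z, hz, rfl⟩ := AffineSubspace.mem_smul_iff.mp (hy c)
      refine AffineSubspace.mem_smul_iff.mpr ⟨P b • z, hC.prop.2 _ _ _ ?_, smul_comm _ _ _⟩
      rwa [mul_right_comm]
  have hDC : (fun a => ⨅ b, P b • C (a * b)) ≤ C := fun a =>
    (iInf_le _ 1).trans (by rw [mul_one, map_one, one_smul])
  have hyD := hC.2 hD hDC a hy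
  exact AffineSubspace.mem_smul_iff.mp ((AffineSubspace.mem_iInf_iff _ _).mp hyD b)

theorem IsDivisionSystem.subsingleton_of_minimal {C : Λ → AffineSubspace R N}
    (hC : Minimal (IsDivisionSystem P) C) (a₀ : Λ) : (C a₀ : Set N).Subsingleton := by
  intro x hx x' hx'
  -- the candidates compatible with `x` at `a₀`; at `a₀` only `x` is left
  let D a := P a₀ • (C (a * a₀) ⊓ smulFiber R (P a) x)
  have hD : IsDivisionSystem P D := by
    refine ⟨fun a => ?_, fun a b y hy => ?_⟩
    · obtain ⟨z, hz, hzx⟩ := IsDivisionSystem.exists_smul_eq_of_minimal hC a₀ a hx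
      exact ⟨P a₀ • z, AffineSubspace.mem_smul_iff.mpr
        ⟨z, (AffineSubspace.mem_inf_iff _ _ _).mpr ⟨mul_comm a₀ a ▸ hz, mem_smulFiber.mpr hzx⟩,
          rfl⟩⟩
    · obtain ⟨z, hz, rfl⟩ := AffineSubspace.mem_smul_iff.mp hy
      obtain ⟨hzC, hzx⟩ := (AffineSubspace.mem_inf_iff _ _ _).mp hz
      refine AffineSubspace.mem_smul_iff.mpr ⟨P b • z, (AffineSubspace.mem_inf_iff _ _ _).mpr
        ⟨hC.prop.2 _ _ _ ?_, mem_smulFiber.mpr ?_⟩, smul_comm _ _ _⟩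
      · rwa [mul_right_comm] at hzC
      · rw [smul_smul, ← map_mul, mem_smulFiber.mp hzx]
  have hDC : D ≤ C := by
    intro a y hy
    obtain ⟨z, hz, rfl⟩ := AffineSubspace.mem_smul_iff.mp hy
    exact hC.prop.2 _ _ _ ((AffineSubspace.mem_inf_iff _ _ _).mp hz).1
  obtain ⟨z, hz, rfl⟩ := AffineSubspace.mem_smul_iff.mp (hC.2 hD hDC a₀ hx')
  exact (mem_smulFiber.mp ((AffineSubspace.mem_inf_iff _ _ _).mp hz).2).symm

theorem exists_smul_compatible_family
    (hP : ∀ a, Function.Surjective (P a • · : N → N)) (n₀ : N) :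
    ∃ g : Λ → N, g 1 = n₀ ∧ ∀ a b, P b • g (a * b) = g a := by
  have h₀ : IsDivisionSystem P fun a => smulFiber R (P a) n₀ := by
    refine ⟨fun a => ?_, fun a b y hy => ?_⟩
    · obtain ⟨z, hz⟩ := hP a n₀
      exact ⟨z, mem_smulFiber.mpr hz⟩
    · rw [mem_smulFiber, smul_smul, ← map_mul, mem_smulFiber.mp hy]
  obtain ⟨C, hC₀, hC⟩ := h₀.exists_minimal_le
  choose g hg using hC.prop.1
  refine ⟨g, ?_, fun a b =>
    IsDivisionSystem.subsingleton_of_minimal hC a (hC.prop.2 a b _ (hg _)) (hg a)⟩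
  simpa using mem_smulFiber.mp (hC₀ 1 (hg 1))

end DivisionSystem

section Colocalization

variable {R N : Type*} [CommRing R] [AddCommGroup N] [Module R N]

theorem Localization.exists_linearMap_mk {S : Submonoid R} (g : S → N)
    (hg : ∀ s t : S, (t : R) • g (s * t) = g s) :
    ∃ f : Localization S →ₗ[R] N, ∀ r s, f (.mk r s) = r • g s := by
  have hwd {a c : R} {b d : S} (h : Localization.r S (a, b) (c, d)) : a • g b = c • g d := by
    obtain ⟨e, he⟩ := Localization.r_iff_exists.mp h
    dsimp only at he
    calc a • g b = (e * (d * a) : R) • g (b * (e * d)) := by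
          rw [← hg b (e * d), smul_smul, Submonoid.coe_mul, mul_left_comm, mul_comm a]
      _ = (e * (b * c) : R) • g (d * (e * b)) := by
          rw [he, mul_left_comm b e d, mul_left_comm d e b, mul_comm b d]
      _ = c • g d := by
          rw [← hg d (e * b), smul_smul, Submonoid.coe_mul, mul_comm c, mul_assoc]
  refine ⟨{ toFun := fun y => y.liftOn (fun r s => r • g s) hwd,
             map_add' := fun y z => ?_,
             map_smul' := fun r y => ?_ }, fun r s => rfl⟩
  · induction y using Localization.induction_on with | H y => ?_
    induction z using Localization.induction_on with | H z => ?_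
    obtain ⟨a, s⟩ := y
    obtain ⟨b, t⟩ := z
    simp only [Localization.add_mk, Localization.liftOn_mk]
    rw [← hg s t, ← hg t s, mul_comm t s, smul_smul, smul_smul, ← add_smul]
    congr 1
    ring
  · induction y using Localization.induction_on with | H y => ?_
    obtain ⟨a, s⟩ := y
    simp only [Localization.smul_mk, Localization.liftOn_mk, smul_eq_mul, RingHom.id_apply,
      mul_smul]

theorem Localization.exists_linearMap_ne_zero [IsArtinian R N] [Nontrivial N] (S : Submonoid R)
    (hS : ∀ s ∈ S, Function.Surjective (s • · : N → N)) :
    ∃ f : Localization S →ₗ[R] N, f ≠ 0 := by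
  obtain ⟨n₀, hn₀⟩ := exists_ne (0 : N)
  obtain ⟨g, hg₁, hg⟩ := exists_smul_compatible_family (P := S.subtype) (fun s => hS s s.2) n₀
  obtain ⟨f, hf⟩ := Localization.exists_linearMap_mk g hg
  refine ⟨f, fun h => hn₀ ?_⟩
  simpa [hf, hg₁] using LinearMap.congr_fun h (.mk 1 1)

end Colocalization

section Secondary

variable {R M : Type u} [CommRing R] [AddCommGroup M] [Module R M]

lemma Submodule.mem_annihilator_radical_iff {N : Submodule R M} {x : R} :
    x ∈ N.annihilator.radical ↔ ∃ k : ℕ, ∀ m ∈ N, x ^ k • m = 0 := by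
  simp only [Ideal.mem_radical_iff, Submodule.mem_annihilator]

variable {p : Ideal R} {N : Submodule R M}

lemma IsSecondary.exists_smul_eq (h : IsSecondary R p N) {x : R} (hx : x ∉ p) :
    ∀ m ∈ N, ∃ m' ∈ N, x • m' = m :=
  (h.2.1 x).resolve_right fun hnil =>
    hx (h.2.2 ▸ Submodule.mem_annihilator_radical_iff.mpr hnil)

lemma IsSecondary.isPrime (h : IsSecondary R p N) : p.IsPrime := by
  rw [h.2.2]
  refine Ideal.isPrime_radical (Ideal.isPrimary_iff.mpr ⟨?_, fun {a b} hab => ?_⟩)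
  · rw [Ne, Ideal.eq_top_iff_one, Submodule.mem_annihilator]
    exact fun h1 => h.1 ((Submodule.eq_bot_iff _).mpr fun m hm => by simpa using h1 m hm)
  · by_cases hb : b ∈ N.annihilator.radical
    · exact Or.inr hb
    refine Or.inl (Submodule.mem_annihilator.mpr fun m hm => ?_)
    obtain ⟨m', hm', rfl⟩ := h.exists_smul_eq (h.2.2 ▸ hb) m hm
    rw [smul_smul]
    exact Submodule.mem_annihilator.mp hab m' hm'

lemma IsSecondary.sup {A B : Submodule R M} (hA : IsSecondary R p A) (hB : IsSecondary R p B) :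
    IsSecondary R p (A ⊔ B) := by
  have hrad : p = (A ⊔ B).annihilator.radical := by
    rw [Submodule.annihilator_sup, Ideal.radical_inf, ← hA.2.2, ← hB.2.2, inf_idem]
  refine ⟨fun hbot => hA.1 (eq_bot_iff.mpr (hbot ▸ le_sup_left)), fun x => ?_, hrad⟩
  by_cases hx : x ∈ p
  · exact Or.inr (Submodule.mem_annihilator_radical_iff.mp (hrad ▸ hx))
  refine Or.inl fun m hm => ?_
  obtain ⟨a, ha, b, hb, rfl⟩ := Submodule.mem_sup.mp hm
  obtain ⟨a', ha', rfl⟩ := hA.exists_smul_eq hx a ha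
  obtain ⟨b', hb', rfl⟩ := hB.exists_smul_eq hx b hb
  exact ⟨a' + b', Submodule.add_mem_sup ha' hb', smul_add _ _ _⟩

lemma exists_lt_lt_sup_eq_of_not_isSecondary [IsArtinian R M] {P : Submodule R M} (hP : P ≠ ⊥)
    (h : ¬ IsSecondary R P.annihilator.radical P) : ∃ A < P, ∃ B < P, A ⊔ B = P := by
  obtain ⟨x, hx⟩ := not_forall.mp fun hdich => h ⟨hP, hdich, rfl⟩
  obtain ⟨hsurj, hnil⟩ := not_or.mp hx
  -- Fitting: `P = ker xⁿ + xⁿ P` for large `n`, and neither summand is all of `P`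
  let f : Module.End R P := algebraMap R (Module.End R P) x
  obtain ⟨n, hn⟩ := (LinearMap.eventually_codisjoint_ker_pow_range_pow f).exists_forall_of_atTop
  have hpow (y : P) : (f ^ (n + 1)) y = x ^ (n + 1) • y := by
    simp [f, ← map_pow, Module.algebraMap_end_apply]
  have hmap : StrictMono (Submodule.map P.subtype) :=
    Submodule.map_strictMono_of_injective P.injective_subtype
  refine ⟨(f ^ (n + 1)).ker.map P.subtype, ?_, (f ^ (n + 1)).range.map P.subtype, ?_, ?_⟩
  · conv_rhs => rw [← P.map_subtype_top]
    refine hmap (lt_top_iff_ne_top.mpr fun h0 => hnil ⟨n + 1, fun m hm => ?_⟩)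
    simpa [hpow] using
      congrArg Subtype.val (LinearMap.congr_fun (LinearMap.ker_eq_top.mp h0) ⟨m, hm⟩)
  · conv_rhs => rw [← P.map_subtype_top]
    refine hmap (lt_top_iff_ne_top.mpr fun h0 => hsurj fun m hm => ?_)
    obtain ⟨y, hy⟩ := LinearMap.range_eq_top.mp h0 ⟨m, hm⟩
    refine ⟨x ^ n • (y : M), P.smul_mem _ y.2, ?_⟩
    rw [smul_smul, ← pow_succ', ← Submodule.coe_smul, ← hpow, hy]
  · rw [← Submodule.map_sup, (hn (n + 1) n.le_succ).eq_top, Submodule.map_subtype_top]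

theorem exists_finset_isSecondary_sup_eq [IsArtinian R M] (P : Submodule R M) :
    ∃ s : Finset (Submodule R M),
      (∀ Q ∈ s, IsSecondary R Q.annihilator.radical Q) ∧ s.sup id = P := by
  classical
  induction P using IsArtinian.induction with | _ P ih => ?_
  by_cases hbot : P = ⊥
  · exact ⟨∅, by simp, by simp [hbot]⟩
  by_cases hsec : IsSecondary R P.annihilator.radical P
  · exact ⟨{P}, by simpa using hsec, by simp⟩
  obtain ⟨A, hA, B, hB, hAB⟩ := exists_lt_lt_sup_eq_of_not_isSecondary hbot hsec
  obtain ⟨s, hs, rfl⟩ := ih A hA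
  obtain ⟨t, ht, rfl⟩ := ih B hB
  exact ⟨s ∪ t, fun Q hQ => (Finset.mem_union.mp hQ).elim (hs Q) (ht Q),
    by rw [Finset.sup_union, hAB]⟩

variable (R) in
def IsMinimalSecondaryRep (s : Finset (Submodule R M)) : Prop :=
  (∀ Q ∈ s, IsSecondary R Q.annihilator.radical Q) ∧ s.sup id = ⊤ ∧
    Set.InjOn (fun Q : Submodule R M => Q.annihilator.radical) s ∧ ∀ Q ∈ s, (s.erase Q).sup id ≠ ⊤

theorem exists_isMinimalSecondaryRep [IsArtinian R M] :
    ∃ s : Finset (Submodule R M), IsMinimalSecondaryRep R s := by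
  classical
  -- a secondary representation with fewest components: merging two components with the same
  -- radical, or dropping a redundant one, would shorten it
  obtain ⟨s, ⟨hsec, hsup⟩, hmin⟩ := (InvImage.wf Finset.card wellFounded_lt).has_min
    {s : Finset (Submodule R M) | (∀ Q ∈ s, IsSecondary R Q.annihilator.radical Q) ∧
      s.sup id = ⊤} (exists_finset_isSecondary_sup_eq ⊤)
  refine ⟨s, hsec, hsup, fun Q hQ Q' hQ' hrad => ?_, fun Q hQ herase => ?_⟩
  · by_contra hne
    have hQ'Q : Q' ∈ s.erase Q := Finset.mem_erase.mpr ⟨Ne.symm hne, hQ'⟩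
    refine hmin (insert (Q ⊔ Q') ((s.erase Q).erase Q')) ⟨fun Q'' hQ'' => ?_, ?_⟩ ?_
    · rcases Finset.mem_insert.mp hQ'' with rfl | hQ''
      · have hrad' : Q.annihilator.radical = Q'.annihilator.radical := hrad
        have h := (hsec Q hQ).sup (hrad' ▸ hsec Q' hQ')
        exact ⟨h.1, h.2.1, rfl⟩
      · exact hsec Q'' (Finset.mem_of_mem_erase (Finset.mem_of_mem_erase hQ''))
    · rw [← hsup]
      conv_rhs => rw [← Finset.insert_erase hQ, ← Finset.insert_erase hQ'Q]
      simp only [Finset.sup_insert, id, sup_assoc]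
    · have h₁ := Finset.card_erase_of_mem hQ
      have h₂ := Finset.card_erase_of_mem hQ'Q
      have h₃ := Finset.card_insert_le (Q ⊔ Q') ((s.erase Q).erase Q')
      have h₄ := Finset.card_pos.mpr ⟨Q', hQ'Q⟩
      show (insert (Q ⊔ Q') ((s.erase Q).erase Q')).card < s.card
      omega
  · exact hmin (s.erase Q) ⟨fun Q' hQ' => hsec Q' (Finset.mem_of_mem_erase hQ'), herase⟩
      (Finset.card_erase_lt_of_mem hQ)

end Secondary

section Cosupport

variable {R M : Type u} [CommRing R] [AddCommGroup M] [Module R M]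

theorem IsMinimalSecondaryRep.mem_attachedPrimes {s : Finset (Submodule R M)}
    (hs : IsMinimalSecondaryRep R s) {Q : Submodule R M} (hQ : Q ∈ s) :
    (⟨Q.annihilator.radical, (hs.1 Q hQ).isPrime⟩ : PrimeSpectrum R) ∈ attachedPrimes R M := by
  obtain ⟨hsec, hsup, hinj, hirr⟩ := hs
  let e := s.equivFin
  let N : Fin s.card → Submodule R M := fun i => e.symm i
  have hN (i : Fin s.card) : N i ∈ s := (e.symm i).2
  have hNe (Q : Submodule R M) (hQ : Q ∈ s) : N (e ⟨Q, hQ⟩) = Q := by simp [N]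
  have hNinj : Function.Injective N := fun i j h => e.symm.injective (Subtype.ext h)
  refine ⟨s.card, N, fun i => (N i).annihilator.radical, ?_, fun i => hsec _ (hN i),
    fun i j h => hNinj (hinj (hN i) (hN j) h), fun i htop => hirr _ (hN i) ?_, e ⟨Q, hQ⟩,
    congrArg (fun Q => Q.annihilator.radical) (hNe Q hQ)⟩
  · rw [← hsup]
    exact le_antisymm (iSup_le fun i => Finset.le_sup (f := id) (hN i))
      (Finset.sup_le fun Q hQ => le_iSup_of_le (e ⟨Q, hQ⟩) (hNe Q hQ).ge)
  · refine top_unique (htop ▸ iSup₂_le fun j hj => Finset.le_sup (f := id) ?_)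
    exact Finset.mem_erase.mpr ⟨fun h => hj (hNinj h), hN j⟩

lemma annihilator_le_of_mem_cosupport {q : PrimeSpectrum R} (hq : q ∈ cosupport R M) :
    Module.annihilator R M ≤ q.asIdeal := by
  obtain ⟨f, hf⟩ := hq
  refine fun a ha => by_contra fun haq => hf (LinearMap.ext fun y => ?_)
  induction y using Localization.induction_on with | H y => ?_
  obtain ⟨r, s⟩ := y
  have hdiv : (Localization.mk r s : Localization.AtPrime q.asIdeal) =
      a • Localization.mk r (s * ⟨a, haq⟩) := by
    rw [Localization.smul_mk, Localization.mk_eq_mk_iff, Localization.r_iff_exists]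
    exact ⟨1, by simp only [Submonoid.coe_mul, smul_eq_mul]; ring⟩
  rw [hdiv, map_smul, Module.mem_annihilator.mp ha, LinearMap.zero_apply]

theorem mem_cosupport_of_forall_exists_smul_eq [IsArtinian R M] {p : PrimeSpectrum R}
    {N : Submodule R M} (hN : N ≠ ⊥) (h : ∀ s ∉ p.asIdeal, ∀ m ∈ N, ∃ m' ∈ N, s • m' = m) :
    p ∈ cosupport R M := by
  have : Nontrivial N := Submodule.nontrivial_iff_ne_bot.mpr hN
  obtain ⟨f, hf⟩ := Localization.exists_linearMap_ne_zero (N := N) p.asIdeal.primeCompl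
    fun s hs ⟨m, hm⟩ => by
      obtain ⟨m', hm', hsm⟩ := h s hs m hm
      exact ⟨⟨m', hm'⟩, Subtype.ext hsm⟩
  exact ⟨N.subtype.comp f, fun h0 => hf (LinearMap.ext fun y =>
    Subtype.ext (LinearMap.congr_fun h0 y))⟩

lemma Submodule.eq_top_of_sup_eq_top_of_le_smul_top {A B : Submodule R M} {x : R} {k : ℕ}
    (hAB : A ⊔ B = ⊤) (hB : B ≤ x • ⊤) (hk : ∀ b ∈ B, x ^ k • b = 0) : A = ⊤ := by
  have hdecomp (m : M) : ∃ a ∈ A, ∃ b ∈ B, a + b = m :=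
    Submodule.mem_sup.mp (hAB ▸ Submodule.mem_top)
  have hdiv (n : ℕ) (m : M) : ∃ m', m - x ^ n • m' ∈ A := by
    induction n generalizing m with
    | zero => exact ⟨m, by simp⟩
    | succ n ih =>
      obtain ⟨m', hm'⟩ := ih m
      obtain ⟨a, ha, b, hb, rfl⟩ := hdecomp m'
      obtain ⟨c, -, rfl⟩ := (Submodule.mem_smul_pointwise_iff_exists _ _ _).mp (hB hb)
      refine ⟨c, ?_⟩
      convert A.add_mem hm' (A.smul_mem (x ^ n) ha) using 1
      rw [smul_add, smul_smul, ← pow_succ]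
      abel
  refine eq_top_iff.mpr fun m _ => ?_
  obtain ⟨m', hm'⟩ := hdiv k m
  obtain ⟨a, ha, b, hb, rfl⟩ := hdecomp m'
  rw [smul_add, hk b hb, add_zero] at hm'
  simpa using A.add_mem hm' (A.smul_mem (x ^ k) ha)

theorem mem_cosupport_quotient_of_mem_attachedPrimes [IsArtinian R M] {p : PrimeSpectrum R}
    (hp : p ∈ attachedPrimes R M) {x : R} (hx : x ∈ p.asIdeal) :
    p ∈ cosupport R (M ⧸ x • (⊤ : Submodule R M)) := by
  obtain ⟨k, N, q, hsup, hsec, -, hirr, j, hj⟩ := hp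
  have hNj : IsSecondary R p.asIdeal (N j) := hj ▸ hsec j
  obtain ⟨K, hK⟩ := Submodule.mem_annihilator_radical_iff.mp (hNj.2.2 ▸ hx)
  refine mem_cosupport_of_forall_exists_smul_eq
    (N := (N j).map (x • ⊤ : Submodule R M).mkQ) (fun hbot => hirr j ?_) ?_
  · rw [eq_bot_iff, Submodule.map_le_iff_le_comap, Submodule.comap_bot, Submodule.ker_mkQ] at hbot
    refine Submodule.eq_top_of_sup_eq_top_of_le_smul_top ?_ hbot hK
    rw [← hsup, iSup_split_single N j, sup_comm]
    rfl
  · rintro s hs _ ⟨m, hm, rfl⟩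
    obtain ⟨m', hm', rfl⟩ := hNj.exists_smul_eq hs m hm
    exact ⟨_, Submodule.mem_map_of_mem hm', (map_smul _ _ _).symm⟩

theorem exists_mem_attachedPrimes_le_of_mem_cosupport_quotient [IsArtinian R M] {x : R}
    {q : PrimeSpectrum R} (hq : q ∈ cosupport R (M ⧸ x • (⊤ : Submodule R M))) :
    ∃ p ∈ attachedPrimes R M, x ∈ p.asIdeal ∧ p ≤ q := by
  classical
  obtain ⟨s, hs⟩ := exists_isMinimalSecondaryRep (R := R) (M := M)
  let t := s.filter fun Q => x ∈ Q.annihilator.radical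
  have hprod : ∏ Q ∈ t, Q.annihilator ≤ Module.annihilator R (M ⧸ x • (⊤ : Submodule R M)) := by
    intro a ha
    rw [Module.mem_annihilator]
    intro m
    obtain ⟨m, rfl⟩ := Submodule.mkQ_surjective _ m
    rw [← map_smul, Submodule.mkQ_apply, Submodule.Quotient.mk_eq_zero]
    suffices s.sup id ≤ (x • ⊤ : Submodule R M).comap (DistribSMul.toLinearMap R M a) by
      exact this (hs.2.1 ▸ Submodule.mem_top)
    refine Finset.sup_le fun Q hQ m hm => ?_
    by_cases hx : x ∈ Q.annihilator.radical
    · have haQ := (Ideal.prod_le_inf.trans (Finset.inf_le (Finset.mem_filter.mpr ⟨hQ, hx⟩))) ha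
      simp [Submodule.mem_annihilator.mp haQ m hm]
    · obtain ⟨m', -, rfl⟩ := (hs.1 Q hQ).exists_smul_eq hx m hm
      simpa [smul_comm a x] using Submodule.smul_mem_pointwise_smul (a • m') x ⊤ trivial
  obtain ⟨Q, hQt, hQq⟩ := q.isPrime.prod_le.mp (hprod.trans (annihilator_le_of_mem_cosupport hq))
  obtain ⟨hQs, hxQ⟩ := Finset.mem_filter.mp hQt
  exact ⟨_, hs.mem_attachedPrimes hQs, hxQ, (Ideal.radical_mono hQq).trans_eq q.isPrime.radical⟩

end Cosupport

theorem statement0_general (R : Type u) [CommRing R]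
    (X : Set (PrimeSpectrum R)) (hX : IsSaturatedSet R X)
    (M : Type u) [AddCommGroup M] [Module R M] [IsArtinian R M] (x : R) :
    cosupport R (M ⧸ (Ideal.span {x} • (⊤ : Submodule R M))) ⊆ X ↔
      ∀ p ∈ attachedPrimes R M, p ∉ X → x ∉ p.asIdeal := by
  rw [Submodule.ideal_span_singleton_smul]
  refine ⟨fun hcos p hp hpX hxp => hpX (hcos (mem_cosupport_quotient_of_mem_attachedPrimes hp hxp)),
    fun H q hq => ?_⟩
  obtain ⟨p, hp, hxp, hpq⟩ := exists_mem_attachedPrimes_le_of_mem_cosupport_quotient hq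
  exact hX p (by_contra fun hpX => H p hp hpX hxp) q hpq

/-- Let `R` be a Noetherian commutative ring, `X` a saturated subset of
`Spec R`, and `M` an Artinian `R`-module. Then `x ∈ R` is an `M`-filter co-regular element
with respect to `X` (i.e. `Cos_R(M/xM) ⊆ X`) iff `x` lies outside every prime in
`Att_R M − X`. -/
theorem statement0 (R : Type u) [CommRing R] [IsNoetherianRing R]
    (X : Set (PrimeSpectrum R)) (hX : IsSaturatedSet R X)
    (M : Type u) [AddCommGroup M] [Module R M] [IsArtinian R M] (x : R) :
    cosupport R (M ⧸ (Ideal.span {x} • (⊤ : Submodule R M))) ⊆ X ↔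
      ∀ p ∈ attachedPrimes R M, p ∉ X → x ∉ p.asIdeal :=
  statement0_general R X hX M x
end

section
/- Let R be a commutative ring, X an arbitrary subset of Spec R, and M an Artinian R-module. A sequence x_1, x_2, …, x_n ∈ R is an M-filter co-regular sequence with respect to X if and only if for every prime p ∈ Cos_R M − X, the sequence x_1/1, x_2/1, …, x_n/1 ∈ R_p is a Hom_R(R_p, M)-quasi co-regular sequence (as a sequence on the R_p-module Hom_R(R_p, M)). -/
open CategoryTheory

universe u

/-!
Both sides are compared one index `i` and one prime `p` at a time. Put
`T = (0 :_M (x_1, …, x_{i-1}))`. Co-localization identifies `Hom_R(R_p, T)` with the elements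
of `Hom_R(R_p, M)` killed by `x_1/1, …, x_{i-1}/1`, and since `Hom_R(R_p, -)` is exact on
Artinian modules, `Hom_R(R_p, T / x_i T)` vanishes iff `x_i/1` acts surjectively on
`Hom_R(R_p, T)`. Exactness also gives `Cos_R(T / x_i T) ⊆ Cos_R M`, so the primes outside
`Cos_R M` play no role.

Exactness of `Hom_R(S⁻¹R, -)` on Artinian modules is a compactness argument: a map `S⁻¹R → M`
is a family `(m_s)_{s ∈ S}` with `t • m_{st} = m_s`, so lifting a map along a surjection means
solving a system of linear equations all of whose finite subsystems are solvable; Artinian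
modules are algebraically compact because a directed family of cosets has a smallest direction.
-/

section LinearCompactness

variable {R M : Type*} [CommRing R] [AddCommGroup M] [Module R M]

theorem IsArtinian.nonempty_iInter_affineSubspace [IsArtinian R M] {ι : Type*} [Nonempty ι]
    (A : ι → AffineSubspace R M) (hA : ∀ i, (A i : Set M).Nonempty)
    (hdir : Directed (· ≥ ·) A) : (⋂ i, (A i : Set M)).Nonempty := by
  let i₀ := Function.argmin fun i => (A i).direction
  suffices ∀ j, A i₀ ≤ A j from (hA i₀).mono (Set.subset_iInter fun j => this j)
  intro j
  obtain ⟨k, hk₀, hkj⟩ := hdir i₀ j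
  have hdir_eq : (A k).direction = (A i₀).direction :=
    (AffineSubspace.direction_le hk₀).eq_of_not_lt
      (Function.not_lt_argmin (fun i => (A i).direction) k)
  rwa [← AffineSubspace.eq_of_direction_eq_of_nonempty_of_le hdir_eq (hA k) hk₀]

variable {I : Type*}

namespace AffineSystem

/-- The condition `∑ᵢ cᵢ • h i ∈ A` on unknowns `h : I → M`, given by its coefficients
`c : I →₀ R` and an affine subspace `A` of `M`. -/
abbrev Condition (R I M : Type*) [CommRing R] [AddCommGroup M] [Module R M] : Type _ :=
  (I →₀ R) × AffineSubspace R M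

def IsSolution (E : Set (Condition R I M)) (h : I → M) : Prop :=
  ∀ e ∈ E, Finsupp.linearCombination R h e.1 ∈ e.2

def FinitelySolvable (E : Set (Condition R I M)) : Prop :=
  ∀ F : Finset (Condition R I M), ↑F ⊆ E → ∃ h, IsSolution (F : Set (Condition R I M)) h

theorem IsSolution.smul_sub_add {E : Set (Condition R I M)} {h₁ h₂ h₃ : I → M}
    (h₁E : IsSolution E h₁) (h₂E : IsSolution E h₂) (h₃E : IsSolution E h₃) (r : R) :
    IsSolution E (r • (h₁ - h₂) + h₃) := by
  intro e he
  have := e.2.smul_vsub_vadd_mem r (h₁E e he) (h₂E e he) (h₃E e he)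
  simpa [Finsupp.linearCombination_apply, Finsupp.sum_add, Finsupp.sum_sub, Finsupp.smul_sum,
    smul_add, smul_sub, smul_comm r] using this

def valuesAt (E : Set (Condition R I M)) (i : I) : AffineSubspace R M where
  carrier := (· i) '' {h | IsSolution E h}
  smul_vsub_vadd_mem' := by
    rintro r _ _ _ ⟨h₁, h₁E, rfl⟩ ⟨h₂, h₂E, rfl⟩ ⟨h₃, h₃E, rfl⟩
    exact ⟨_, h₁E.smul_sub_add h₂E h₃E r, rfl⟩

theorem valuesAt_anti {E E' : Set (Condition R I M)} (hEE' : E ⊆ E') (i : I) :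
    valuesAt E' i ≤ valuesAt E i := by
  rintro _ ⟨h, hh, rfl⟩
  exact ⟨h, fun e he => hh e (hEE' he), rfl⟩

theorem FinitelySolvable.sUnion {c : Set (Set (Condition R I M))}
    (hc : ∀ E ∈ c, FinitelySolvable E) (hchain : IsChain (· ⊆ ·) c) (hne : c.Nonempty) :
    FinitelySolvable (⋃₀ c) := by
  intro F hF
  obtain ⟨E, hE, hFE⟩ := hchain.directedOn.exists_mem_subset_of_finite_of_subset_sUnion hne
    F.finite_toSet hF
  exact hc E hE F hFE

variable (R) in
noncomputable def pin (i : I) (a : M) : Condition R I M :=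
  (Finsupp.single i 1, affineSpan R {a})

theorem linearCombination_mem_pin_iff {h : I → M} {i : I} {a : M} :
    Finsupp.linearCombination R h (pin R i a).1 ∈ (pin R i a).2 ↔ h i = a := by
  simp [pin, AffineSubspace.mem_affineSpan_singleton]

variable [IsArtinian R M]

theorem exists_pin_mem_of_maximal {E : Set (Condition R I M)}
    (hE : Maximal FinitelySolvable E) (i : I) : ∃ a : M, pin R i a ∈ E := by
  classical
  let D : {F : Finset (Condition R I M) // ↑F ⊆ E} → AffineSubspace R M :=
    fun F => valuesAt ↑F.1 i
  have hD : ∀ F, (D F : Set M).Nonempty := fun F =>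
    let ⟨h, hh⟩ := hE.1 F.1 F.2
    ⟨h i, h, hh, rfl⟩
  have hdir : Directed (· ≥ ·) D := fun F G =>
    ⟨⟨F.1 ∪ G.1, by simpa using ⟨F.2, G.2⟩⟩, valuesAt_anti (by simp) i,
      valuesAt_anti (by simp) i⟩
  have : Nonempty {F : Finset (Condition R I M) // ↑F ⊆ E} := ⟨⟨∅, by simp⟩⟩
  obtain ⟨a, ha⟩ := IsArtinian.nonempty_iInter_affineSubspace D hD hdir
  refine ⟨a, hE.mem_of_prop_insert fun F hF => ?_⟩
  obtain ⟨h, hh, rfl⟩ := Set.mem_iInter.1 ha ⟨F.erase (pin R i a), by simpa using hF⟩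
  refine ⟨h, fun e he => ?_⟩
  by_cases hei : e = pin R i (h i)
  · exact hei ▸ linearCombination_mem_pin_iff.2 rfl
  · exact hh e (by simp [hei, he])

/-- Artinian modules are algebraically compact. -/
theorem exists_isSolution {E : Set (Condition R I M)} (hE : FinitelySolvable E) :
    ∃ h, IsSolution E h := by
  classical
  obtain ⟨E', hEE', hmax⟩ := zorn_subset_nonempty {E' | FinitelySolvable E'}
    (fun c hc hchain hne => ⟨⋃₀ c, FinitelySolvable.sUnion hc hchain hne,
      fun _ => Set.subset_sUnion_of_mem⟩) E hE
  choose a ha using exists_pin_mem_of_maximal hmax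
  refine ⟨a, fun e he => ?_⟩
  let F := insert e (e.1.support.image fun i => pin R i (a i))
  obtain ⟨h, hh⟩ := hmax.1 F (by
    simp only [F, Finset.coe_insert, Finset.coe_image, Set.insert_subset_iff]
    exact ⟨hEE' he, Set.image_subset_iff.2 fun i _ => ha i⟩)
  have hagree : ∀ i ∈ e.1.support, h i = a i := fun i hi => linearCombination_mem_pin_iff.1 <|
    hh (pin R i (a i)) (Finset.mem_insert_of_mem (Finset.mem_image_of_mem _ hi))
  have := hh e (Finset.mem_insert_self _ _)
  rwa [Finsupp.linearCombination_apply, Finsupp.sum, Finset.sum_congr rfl fun i hi => by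
    rw [hagree i hi]] at this

end AffineSystem

end LinearCompactness

namespace Localization

variable {R M M' : Type*} [CommRing R] [AddCommGroup M] [Module R M] [AddCommGroup M']
  [Module R M'] (S : Submonoid R)

/-- `m s` is the image of `1 / s`. -/
def linearMapOfCompatible (m : S → M) (hm : ∀ s t : S, (t : R) • m (s * t) = m s) :
    Localization S →ₗ[R] M where
  toFun w := w.liftOn (fun r s => r • m s) fun {a c b d} hr => by
    obtain ⟨u, hu⟩ := r_iff_exists.1 hr
    dsimp only at hu ⊢
    rw [← hm b (d * u), ← hm d (b * u), smul_smul, smul_smul, mul_left_comm b d u]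
    congr 1
    push_cast
    linear_combination hu
  map_add' v w := by
    induction v using Localization.induction_on with | H v
    induction w using Localization.induction_on with | H w
    simp only [add_mk, liftOn_mk, add_smul, mul_smul]
    rw [← hm v.2 w.2, ← hm w.2 v.2, mul_comm w.2, smul_comm w.1, smul_comm v.1, add_comm]
  map_smul' r w := by
    induction w using Localization.induction_on
    simp [smul_mk, liftOn_mk, smul_smul]

@[simp]
theorem linearMapOfCompatible_mk (m : S → M) (hm : ∀ s t : S, (t : R) • m (s * t) = m s)
    (r : R) (s : S) : linearMapOfCompatible S m hm (mk r s) = r • m s := by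
  simp only [linearMapOfCompatible, LinearMap.coe_mk, AddHom.coe_mk, liftOn_mk]

variable {S}

theorem exists_compatible_lift_on_finset {π : M →ₗ[R] M'} (hπ : Function.Surjective π)
    (f : Localization S →ₗ[R] M') (J : Finset S) :
    ∃ m : S → M, (∀ s ∈ J, π (m s) = f (mk 1 s)) ∧
      ∀ s t, s ∈ J → s * t ∈ J → (t : R) • m (s * t) = m s := by
  classical
  let U : S := ∏ j ∈ J, j
  -- `c s` plays the role of `U / s`; working over `1 / U²` absorbs the zero divisors of `S`.
  let c : S → R := fun s => ∏ j ∈ J.erase s, (j : R)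
  have hc : ∀ s ∈ J, (s : R) * c s = U := fun s hs => by
    simp [c, U, Finset.mul_prod_erase _ _ hs]
  obtain ⟨m₁, hm₁⟩ := hπ (f (mk 1 (U * U)))
  refine ⟨fun s => (c s * U) • m₁, fun s hs => ?_, fun s t hs hst => ?_⟩
  · rw [map_smul, hm₁, ← map_smul, smul_mk, smul_eq_mul, mul_one]
    refine congrArg f (mk_eq_mk_iff.2 (r_of_eq ?_))
    simp only [Submonoid.coe_mul, ← hc s hs]
    ring
  · have h₁ := hc (s * t) hst
    have h₂ := hc s hs
    push_cast at h₁
    rw [smul_smul]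
    congr 1
    linear_combination (-(t * c (s * t))) * h₂ + c s * h₁

open AffineSystem in
theorem exists_lift_of_isArtinian [IsArtinian R M] {π : M →ₗ[R] M'}
    (hπ : Function.Surjective π) (f : Localization S →ₗ[R] M') :
    ∃ g : Localization S →ₗ[R] M, π ∘ₗ g = f := by
  classical
  -- A lift is a family `m` with `π (m s) = f (1 / s)` and `t • m (s * t) = m s`.
  let cond : S ⊕ S × S → (S →₀ R) × AffineSubspace R M
    | .inl s => (Finsupp.single s 1, (affineSpan R {f (mk 1 s)}).comap π.toAffineMap)
    | .inr (s, t) => (Finsupp.single (s * t) (t : R) - Finsupp.single s 1, affineSpan R {0})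
  have hcond_inl : ∀ m : S → M, ∀ s, Finsupp.linearCombination R m (cond (.inl s)).1 ∈
      (cond (.inl s)).2 ↔ π (m s) = f (mk 1 s) := fun m s => by
    simp [cond, AffineSubspace.mem_affineSpan_singleton]
  have hcond_inr : ∀ m : S → M, ∀ s t, Finsupp.linearCombination R m (cond (.inr (s, t))).1 ∈
      (cond (.inr (s, t))).2 ↔ (t : R) • m (s * t) = m s := fun m s t => by
    simp [cond, AffineSubspace.mem_affineSpan_singleton, sub_eq_zero]
  obtain ⟨m, hm⟩ : ∃ m, IsSolution (Set.range cond) m := by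
    refine exists_isSolution fun F hF => ?_
    rw [← Set.image_univ, Finset.subset_set_image_iff] at hF
    obtain ⟨L, -, rfl⟩ := hF
    obtain ⟨m, hmπ, hmcompat⟩ := exists_compatible_lift_on_finset hπ f
      (L.image (Sum.elim id Prod.fst) ∪ L.image (Sum.elim id fun st => st.1 * st.2))
    refine ⟨m, ?_⟩
    simp only [IsSolution, Finset.coe_image, Set.forall_mem_image]
    rintro (s | ⟨s, t⟩) hl
    · exact (hcond_inl m s).2 (hmπ s (Finset.mem_union_left _ (Finset.mem_image_of_mem _ hl)))
    · exact (hcond_inr m s t).2 (hmcompat s t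
        (Finset.mem_union_left _ (Finset.mem_image_of_mem _ hl))
        (Finset.mem_union_right _ (Finset.mem_image_of_mem (Sum.elim id _) hl)))
  refine ⟨linearMapOfCompatible S m fun s t => (hcond_inr m s t).1 (hm _ ⟨.inr (s, t), rfl⟩), ?_⟩
  ext w
  induction w using Localization.induction_on with | H w
  rw [LinearMap.comp_apply, linearMapOfCompatible_mk, map_smul,
    (hcond_inl m w.2).1 (hm _ ⟨.inl w.2, rfl⟩), ← map_smul, smul_mk, smul_eq_mul, mul_one]

end Localization

section Colocalization

variable {R M : Type u} [CommRing R] [AddCommGroup M] [Module R M]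

theorem colocModule_smul_apply {S : Type u} [CommRing S] [Algebra R S] (c : S)
    (F : S →ₗ[R] M) (t : S) : (c • F) t = F (c * t) :=
  rfl

theorem colocModule_algebraMap_smul_apply {S : Type u} [CommRing S] [Algebra R S] (r : R)
    (F : S →ₗ[R] M) (t : S) : (algebraMap R S r • F) t = r • F t := by
  rw [colocModule_smul_apply, ← Algebra.smul_def, map_smul]

theorem mem_torsionBySet_coloc_iff {S : Type u} [CommRing S] [Algebra R S] (s : Set R)
    (F : S →ₗ[R] M) :
    F ∈ Submodule.torsionBySet S (S →ₗ[R] M) (algebraMap R S '' s) ↔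
      ∀ t, F t ∈ Submodule.torsionBySet R M s := by
  simp only [Submodule.mem_torsionBySet_iff, Subtype.forall, Set.forall_mem_image,
    LinearMap.ext_iff, colocModule_algebraMap_smul_apply, LinearMap.zero_apply]
  exact ⟨fun h t r hr => h hr t, fun h r hr t => h t r hr⟩

variable (S : Submonoid R)

theorem forall_eq_zero_hom_quotient_iff [IsArtinian R M] (a : R) :
    (∀ f : Localization S →ₗ[R] M ⧸ (Ideal.span {a} • ⊤ : Submodule R M), f = 0) ↔
      ∀ F : Localization S →ₗ[R] M, ∃ G, algebraMap R (Localization S) a • G = F := by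
  have hmem : ∀ n : M, a • n ∈ (Ideal.span {a} • ⊤ : Submodule R M) := fun n =>
    Submodule.smul_mem_smul (Ideal.mem_span_singleton_self a) Submodule.mem_top
  constructor
  · intro h F
    have hF : ∀ t, F t ∈ (Ideal.span {a} • ⊤ : Submodule R M) := fun t => by
      simpa using LinearMap.congr_fun (h ((Submodule.mkQ _).comp F)) t
    let μ := (a • LinearMap.id).codRestrict _ hmem
    have hμ : Function.Surjective μ := by
      rintro ⟨z, hz⟩
      rw [Submodule.ideal_span_singleton_smul, Submodule.mem_smul_pointwise_iff_exists] at hz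
      obtain ⟨n, -, rfl⟩ := hz
      exact ⟨n, rfl⟩
    obtain ⟨G, hG⟩ := Localization.exists_lift_of_isArtinian hμ (F.codRestrict _ hF)
    refine ⟨G, LinearMap.ext fun t => ?_⟩
    rw [colocModule_algebraMap_smul_apply]
    exact congrArg Subtype.val (LinearMap.congr_fun hG t)
  · intro h f
    obtain ⟨F, rfl⟩ := Localization.exists_lift_of_isArtinian (Submodule.mkQ_surjective _) f
    obtain ⟨G, rfl⟩ := h F
    ext t
    rw [LinearMap.comp_apply, colocModule_algebraMap_smul_apply, LinearMap.zero_apply,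
      Submodule.mkQ_apply, Submodule.Quotient.mk_eq_zero]
    exact hmem (G t)

theorem cosupport_subset_of_surjective [IsArtinian R M] {N : Type u} [AddCommGroup N]
    [Module R N] {π : M →ₗ[R] N} (hπ : Function.Surjective π) :
    cosupport R N ⊆ cosupport R M := fun _ ⟨f, hf⟩ =>
  let ⟨g, hg⟩ := Localization.exists_lift_of_isArtinian hπ f
  ⟨g, fun hg₀ => hf (by rw [← hg, hg₀, LinearMap.comp_zero])⟩

theorem cosupport_subset_of_injective {N : Type u} [AddCommGroup N] [Module R N]
    {ι : N →ₗ[R] M} (hι : Function.Injective ι) : cosupport R N ⊆ cosupport R M :=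
  fun _ ⟨f, hf⟩ => ⟨ι ∘ₗ f, fun hf₀ => hf <| LinearMap.ext fun t => hι <| by
    rw [← LinearMap.comp_apply, hf₀, LinearMap.zero_apply, LinearMap.zero_apply, map_zero]⟩

theorem notMem_cosupport_quotient_iff [IsArtinian R M] (p : PrimeSpectrum R) (s : Set R)
    (a : R) :
    p ∉ cosupport R (Submodule.torsionBySet R M s ⧸
        (Ideal.span {a} • ⊤ : Submodule R (Submodule.torsionBySet R M s))) ↔
      ∀ F ∈ Submodule.torsionBySet (Localization.AtPrime p.asIdeal)
          (Localization.AtPrime p.asIdeal →ₗ[R] M)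
          (algebraMap R (Localization.AtPrime p.asIdeal) '' s),
        ∃ G ∈ Submodule.torsionBySet (Localization.AtPrime p.asIdeal)
          (Localization.AtPrime p.asIdeal →ₗ[R] M)
          (algebraMap R (Localization.AtPrime p.asIdeal) '' s),
          algebraMap R (Localization.AtPrime p.asIdeal) a • G = F := by
  set T := Submodule.torsionBySet R M s
  simp only [cosupport, Set.mem_ofPred_eq, not_exists, not_not, mem_torsionBySet_coloc_iff]
  rw [forall_eq_zero_hom_quotient_iff]
  constructor
  · intro h F hF
    obtain ⟨G, hG⟩ := h (F.codRestrict T hF)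
    exact ⟨T.subtype ∘ₗ G, fun t => (G t).2,
      LinearMap.ext fun t => congrArg Subtype.val (LinearMap.congr_fun hG t)⟩
  · intro h F
    obtain ⟨G, hGT, hG⟩ := h (T.subtype ∘ₗ F) fun t => (F t).2
    exact ⟨G.codRestrict T hGT, LinearMap.ext fun t => Subtype.ext (LinearMap.congr_fun hG t)⟩

end Colocalization

/-- A sequence `x` is an `M`-filter co-regular sequence with respect to
`X` iff for every `p ∈ Cos_R M − X` the sequence of images `x i / 1` in `R_p` is a
`Hom_R(R_p, M)`-quasi co-regular sequence. -/
theorem statement2 (R : Type u) [CommRing R] (X : Set (PrimeSpectrum R))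
    (M : Type u) [AddCommGroup M] [Module R M] [IsArtinian R M] (n : ℕ) (x : Fin n → R) :
    IsFilterCoregSeq R X M x ↔
      ∀ p ∈ cosupport R M, p ∉ X →
        IsQuasiCoregSeq (Localization.AtPrime p.asIdeal)
          (Localization.AtPrime p.asIdeal →ₗ[R] M)
          (fun i => algebraMap R (Localization.AtPrime p.asIdeal) (x i)) := by
  simp only [IsQuasiCoregSeq, ← Set.image_image (algebraMap R _) x]
  constructor
  · intro h p _ hpX i
    exact (notMem_cosupport_quotient_iff p _ (x i)).1 fun hp => hpX (h i hp)
  · intro h i p hp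
    by_contra hpX
    have hpM : p ∈ cosupport R M := cosupport_subset_of_injective (Submodule.injective_subtype _)
      (cosupport_subset_of_surjective (Submodule.mkQ_surjective _) hp)
    exact (notMem_cosupport_quotient_iff p _ (x i)).2 (h p hpM hpX i) hp
end

section
/- Let R be a commutative ring, X an arbitrary subset of Spec R, and let C: ⋯ → M_{i-1} → M_i → M_{i+1} → ⋯ be a complex of Artinian R-modules. Then C is a co-exact sequence with respect to X (i.e., Cos_R(H_i(C)) ⊆ X for all i) if and only if the complex Hom_R(R_p, C), obtained by applying the functor Hom_R(R_p, −), is an exact sequence of R_p-modules for every prime p ∈ Spec R − X. -/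
open CategoryTheory

universe u

/-!
A map `f : Localization S →ₗ[R] N` is the same as the family `f (1 / s)`, `s ∈ S`, subject to
`t • f (1 / (t * s)) = f (1 / s)`. To lift `f` along `φ : M →ₗ[R] N` with `M` Artinian, choose
points in the fibres `φ⁻¹ (f (1 / s))`, which are cosets of `ker φ`. Since `M` is Artinian, a
downward directed family of nonempty cosets has nonempty intersection (a member of minimal
direction lies below all the others). By Zorn's lemma, the compatible systems of cosets inside
these fibres therefore have a minimal element, and in a minimal system every coset is a point.
So `Hom_R(R_p, -)` preserves surjections out of Artinian modules, and `Hom_R(R_p, C)` is exact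
at `M_i` iff `Hom_R(R_p, H_i(C)) = 0`, that is, iff `p ∉ Cos_R H_i(C)`.
-/

theorem AffineSubspace.nonempty_iInf_of_directed {R M ι : Type*} [CommRing R] [AddCommGroup M]
    [Module R M] [IsArtinian R M] [Nonempty ι] (B : ι → AffineSubspace R M)
    (hB : ∀ i, (B i : Set M).Nonempty) (hdir : Directed (· ≥ ·) B) :
    ((⨅ i, B i : AffineSubspace R M) : Set M).Nonempty := by
  obtain ⟨_, ⟨i₀, rfl⟩, hmin⟩ := IsArtinian.set_has_minimal
    (Set.range fun i => (B i).direction) (Set.range_nonempty _)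
  suffices ∀ j, B i₀ ≤ B j from (hB i₀).mono (SetLike.coe_subset_coe.mpr (le_iInf this))
  intro j
  obtain ⟨k, hki₀, hkj⟩ := hdir i₀ j
  have hdir_eq : (B k).direction = (B i₀).direction :=
    (direction_le hki₀).eq_of_not_lt (hmin _ ⟨k, rfl⟩)
  rwa [← eq_of_direction_eq_of_nonempty_of_le hdir_eq (hB k) hki₀]

namespace Colocalization

variable {R M : Type*} [CommRing R] [AddCommGroup M] [Module R M] (S : Submonoid R)

def smulAffineMap (r : R) : M →ᵃ[R] M := (LinearMap.lsmul R M r).toAffineMap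

@[simp]
theorem smulAffineMap_apply (r : R) (m : M) : smulAffineMap r m = r • m := rfl

def IsCosetSystem (B : S → AffineSubspace R M) : Prop :=
  (∀ s, (B s : Set M).Nonempty) ∧ ∀ s t : S, ∀ m ∈ B (t * s), (t : R) • m ∈ B s

variable {S}

namespace IsCosetSystem

variable {A B : S → AffineSubspace R M}

theorem map_smul_le (hB : IsCosetSystem S B) (s t : S) :
    (B (t * s)).map (smulAffineMap (t : R)) ≤ B s := by
  rintro _ ⟨m, hm, rfl⟩
  exact hB.2 s t m hm

theorem map_smul_mul_le (hB : IsCosetSystem S B) (s u v : S) :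
    (B (u * v * s)).map (smulAffineMap ((u * v : S) : R)) ≤
      (B (u * s)).map (smulAffineMap (u : R)) := by
  rintro _ ⟨m, hm, rfl⟩
  refine ⟨(v : R) • m, hB.2 _ v m (by rwa [mul_left_comm, ← mul_assoc]), ?_⟩
  simp [mul_smul]

theorem iInf_of_isChain [IsArtinian R M] {c : Set (S → AffineSubspace R M)}
    (hc : c ⊆ {B | IsCosetSystem S B})
    (hchain : IsChain (· ≤ ·) c) (hne : c.Nonempty) :
    IsCosetSystem S fun s => ⨅ B : c, (B : S → AffineSubspace R M) s := by
  have : Nonempty c := hne.to_subtype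
  refine ⟨fun s => AffineSubspace.nonempty_iInf_of_directed (fun B : c => B.1 s)
    (fun B => (hc B.2).1 s) ?_, fun s t m hm => ?_⟩
  · intro B₁ B₂
    rcases hchain.total B₁.2 B₂.2 with h | h
    · exact ⟨B₁, le_rfl, h s⟩
    · exact ⟨B₂, h s, le_rfl⟩
  · simp only [AffineSubspace.mem_iInf_iff] at hm ⊢
    exact fun B => (hc B.2).2 s t m (hm B)

theorem exists_minimal [IsArtinian R M] (hA : IsCosetSystem S A) :
    ∃ B ≤ A, Minimal (IsCosetSystem S) B := by
  obtain ⟨B, hBA, hB⟩ := zorn_le_nonempty₀ (α := (S → AffineSubspace R M)ᵒᵈ)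
    {B | IsCosetSystem S B} (fun c hc hchain B hB => ⟨_, iInf_of_isChain hc hchain.symm ⟨B, hB⟩,
      fun B' hB' s => iInf_le (fun B : c => B.1 s) ⟨B', hB'⟩⟩) A hA
  exact ⟨B, hBA, hB⟩

theorem map_smul_eq_of_minimal [IsArtinian R M] (hB : Minimal (IsCosetSystem S) B) (s t : S) :
    (B (t * s)).map (smulAffineMap (t : R)) = B s := by
  set B' : S → AffineSubspace R M := fun s => ⨅ t : S, (B (t * s)).map (smulAffineMap (t : R))
  have hB'B : B' ≤ B := fun s =>
    (iInf_le _ 1).trans (by simpa using hB.1.map_smul_le s 1)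
  have hB' : IsCosetSystem S B' := by
    refine ⟨fun s => AffineSubspace.nonempty_iInf_of_directed _
      (fun t => ((hB.1.1 _).image _)) fun t₁ t₂ => ⟨t₁ * t₂, ?_, ?_⟩, fun s u m hm => ?_⟩
    · exact hB.1.map_smul_mul_le s t₁ t₂
    · rw [mul_comm t₁]
      exact hB.1.map_smul_mul_le s t₂ t₁
    · simp only [B', AffineSubspace.mem_iInf_iff] at hm ⊢
      intro t
      obtain ⟨m₀, hm₀, rfl⟩ := hm t
      refine ⟨(u : R) • m₀, hB.1.2 _ u m₀ (by rwa [mul_left_comm]), ?_⟩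
      simp only [smulAffineMap_apply]
      exact smul_comm _ _ _
  exact le_antisymm (hB.1.map_smul_le s t) ((hB.2 hB' hB'B s).trans (iInf_le _ t))

theorem eq_of_minimal [IsArtinian R M] (hB : Minimal (IsCosetSystem S) B) {s₀ : S} {x y : M}
    (hx : x ∈ B s₀) (hy : y ∈ B s₀) : y = x := by
  -- `C s = s₀ • {m ∈ B (s * s₀) | s • m = x}` is a smaller coset system with `C s₀ = {x}`;
  -- it is nonempty because `s • B (s * s₀) = B s₀`.
  set C : S → AffineSubspace R M := fun s =>
    (B (s * s₀) ⊓ (affineSpan R {x}).comap (smulAffineMap (s : R))).map (smulAffineMap (s₀ : R))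
  have hCB : C ≤ B := by
    rintro s _ ⟨m, ⟨hm, -⟩, rfl⟩
    exact hB.1.2 s s₀ m (by rwa [mul_comm])
  have hC : IsCosetSystem S C := by
    refine ⟨fun s => ?_, fun s t _ hm => ?_⟩
    · rw [← map_smul_eq_of_minimal hB s₀ s] at hx
      obtain ⟨m, hm, hmx⟩ := hx
      exact ⟨_, m, ⟨hm, by simpa [AffineSubspace.mem_affineSpan_singleton] using hmx⟩, rfl⟩
    · obtain ⟨m, ⟨hm, hmx⟩, rfl⟩ := hm
      refine ⟨(t : R) • m, ⟨hB.1.2 _ t m (by rwa [← mul_assoc]), ?_⟩, smul_comm _ _ _⟩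
      simpa [AffineSubspace.mem_affineSpan_singleton, smul_smul, mul_comm] using hmx
  obtain ⟨m, ⟨-, hmx⟩, rfl⟩ := hB.2 hC hCB s₀ hy
  simpa [AffineSubspace.mem_affineSpan_singleton] using hmx

theorem exists_compatible_family [IsArtinian R M] (hA : IsCosetSystem S A) :
    ∃ a : S → M, (∀ s, a s ∈ A s) ∧ ∀ s t : S, (t : R) • a (t * s) = a s := by
  obtain ⟨B, hBA, hB⟩ := hA.exists_minimal
  choose a ha using hB.1.1
  exact ⟨a, fun s => hBA s (ha s), fun s t => eq_of_minimal hB (ha s) (hB.1.2 s t _ (ha _))⟩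

end IsCosetSystem

variable {N : Type*} [AddCommGroup N] [Module R N]

def linearMapOfCompatible (a : S → M) (ha : ∀ s t : S, (t : R) • a (t * s) = a s) :
    Localization S →ₗ[R] M where
  toFun z := z.liftOn (fun r s => r • a s) fun {r₁ r₂ s₁ s₂} h => by
    obtain ⟨c, hc⟩ := Localization.r_iff_exists.mp h
    rw [← ha s₁ (c * s₂), ← ha s₂ (c * s₁), smul_smul, smul_smul,
      show c * s₂ * s₁ = c * s₁ * s₂ by ac_rfl]
    congr 1
    push_cast
    linear_combination hc
  map_add' z w := by
    induction z using Localization.induction_on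
    induction w using Localization.induction_on
    rename_i x y
    simp only [Localization.add_mk, Localization.liftOn_mk]
    rw [← ha x.2 y.2, ← ha y.2 x.2, smul_smul, smul_smul, mul_comm y.2, ← add_smul]
    congr 1
    ring
  map_smul' r z := by
    induction z using Localization.induction_on
    simp [Localization.smul_mk, Localization.liftOn_mk, mul_smul]

@[simp]
theorem linearMapOfCompatible_mk (a : S → M) (ha : ∀ s t : S, (t : R) • a (t * s) = a s)
    (r : R) (s : S) : linearMapOfCompatible a ha (Localization.mk r s) = r • a s := by
  simp only [linearMapOfCompatible, LinearMap.coe_mk, AddHom.coe_mk, Localization.liftOn_mk]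

theorem smul_mk_one_mul (s t : S) :
    (t : R) • (Localization.mk 1 (t * s) : Localization S) = Localization.mk 1 s := by
  rw [Localization.smul_mk, Localization.mk_eq_mk_iff, Localization.r_iff_exists]
  exact ⟨1, by simp [mul_comm]⟩

theorem exists_comp_eq_of_range_le [IsArtinian R M] (φ : M →ₗ[R] N)
    (f : Localization S →ₗ[R] N) (hf : LinearMap.range f ≤ LinearMap.range φ) :
    ∃ g : Localization S →ₗ[R] M, φ ∘ₗ g = f := by
  set A : S → AffineSubspace R M := fun s =>
    (affineSpan R {f (Localization.mk 1 s)}).comap φ.toAffineMap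
  have hA : IsCosetSystem S A := by
    refine ⟨fun s => ?_, fun s t m hm => ?_⟩
    · obtain ⟨m, hm⟩ := hf ⟨Localization.mk 1 s, rfl⟩
      exact ⟨m, by simpa [A, AffineSubspace.mem_affineSpan_singleton] using hm⟩
    · simp only [A, AffineSubspace.mem_comap, LinearMap.coe_toAffineMap,
        AffineSubspace.mem_affineSpan_singleton] at hm ⊢
      rw [map_smul, hm, ← map_smul, smul_mk_one_mul]
  obtain ⟨a, haA, ha⟩ := hA.exists_compatible_family
  refine ⟨linearMapOfCompatible a ha, LinearMap.ext fun z => ?_⟩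
  induction z using Localization.induction_on with
  | H x =>
    have hax : φ (a x.2) = f (Localization.mk 1 x.2) := by
      simpa [A, AffineSubspace.mem_affineSpan_singleton] using haA x.2
    simp [hax, ← map_smul, Localization.smul_mk]

open LinearMap in
theorem exact_comp_iff_forall_eq_zero {L : Type*} [AddCommGroup L] [Module R L]
    [IsArtinian R L] [IsArtinian R M] (f : L →ₗ[R] M) (g : M →ₗ[R] N) (hfg : g ∘ₗ f = 0) :
    Function.Exact (fun h : Localization S →ₗ[R] L => f ∘ₗ h)
        (fun h : Localization S →ₗ[R] M => g ∘ₗ h) ↔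
      ∀ φ : Localization S →ₗ[R] (ker g ⧸ (range f).comap (ker g).subtype), φ = 0 := by
  set H := (range f).comap (ker g).subtype
  constructor
  · intro hexact φ
    obtain ⟨ψ, rfl⟩ := exists_comp_eq_of_range_le H.mkQ φ (by simp)
    obtain ⟨h, hh⟩ := (hexact ((ker g).subtype ∘ₗ ψ)).mp <| LinearMap.ext fun z => (ψ z).2
    refine LinearMap.ext fun z => ?_
    rw [LinearMap.comp_apply, LinearMap.zero_apply, Submodule.mkQ_apply,
      Submodule.Quotient.mk_eq_zero]
    exact ⟨h z, congr($hh z)⟩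
  · intro hzero k
    refine ⟨fun hk => exists_comp_eq_of_range_le f k ?_, ?_⟩
    · rintro _ ⟨z, rfl⟩
      simpa [H] using congr($(hzero (H.mkQ ∘ₗ k.codRestrict (ker g) fun z => congr($hk z))) z)
    · rintro ⟨h, rfl⟩
      exact (comp_assoc h f g).symm.trans (by rw [hfg, zero_comp])

end Colocalization

/-- A complex of Artinian `R`-modules is co-exact with respect to `X`
(all homology has co-support inside `X`) iff the co-localized complex `Hom_R(R_p, C)` is
exact for every prime `p ∉ X`. -/
theorem statement3 (R : Type u) [CommRing R] (X : Set (PrimeSpectrum R))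
    (Mod : ℤ → Type u) [∀ i, AddCommGroup (Mod i)] [∀ i, Module R (Mod i)]
    [∀ i, IsArtinian R (Mod i)]
    (d : ∀ i : ℤ, Mod i →ₗ[R] Mod (i + 1))
    (hd : ∀ i : ℤ, (d (i + 1)).comp (d i) = 0) :
    (∀ i : ℤ, cosupport R
        ((LinearMap.ker (d (i + 1))) ⧸
          ((LinearMap.range (d i)).comap (LinearMap.ker (d (i + 1))).subtype)) ⊆ X) ↔
      ∀ p : PrimeSpectrum R, p ∉ X → ∀ i : ℤ,
        Function.Exact
          (fun g : Localization.AtPrime p.asIdeal →ₗ[R] Mod i => (d i).comp g)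
          (fun g : Localization.AtPrime p.asIdeal →ₗ[R] Mod (i + 1) => (d (i + 1)).comp g) := by
  have hexact (p : PrimeSpectrum R) (i : ℤ) :
      Function.Exact (fun g : Localization.AtPrime p.asIdeal →ₗ[R] Mod i => (d i).comp g)
        (fun g : Localization.AtPrime p.asIdeal →ₗ[R] Mod (i + 1) => (d (i + 1)).comp g) ↔
      p ∉ cosupport R ((LinearMap.ker (d (i + 1))) ⧸
        ((LinearMap.range (d i)).comap (LinearMap.ker (d (i + 1))).subtype)) := by
    simpa [cosupport] using Colocalization.exact_comp_iff_forall_eq_zero (d i) (d (i + 1)) (hd i)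
  simp only [hexact, Set.subset_def]
  exact ⟨fun h p hp i hpi => hp (h i p hpi), fun h i p hpi => by_contra fun hp => h p hp i hpi⟩
end

section
/- Let R be a commutative ring and M an Artinian R-module. Then the following are equivalent: (i) Ann_R(0 :_M p) = p for every prime ideal p ∈ V(Ann_R M); (ii) Cos_R(0 :_M I) = Cos_R M ∩ V(I) for every ideal I of R. -/
open CategoryTheory

universe u

/-! A prime `p` lies in the co-support of an Artinian module `M` exactly when `Ann_R M ⊆ p`.
A nonzero map `R_p → M` is found on the part of `M` that is divisible by every `s ∉ p`: there
`n₀ ≠ 0` has an `s`-th root for each `s`, giving partial maps on the submodules `R·(1/s)` of `R_p`,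
and these are glued into a global map because Artinian modules are algebraically compact
(a system of linear equations is solvable as soon as each finite subsystem is).
Applied to `M` and to its Artinian submodules `(0 :_M I)`, both conditions of the theorem become
statements about annihilators, and `I ⊆ Ann_R(0 :_M I)` makes them equivalent. -/

open Finsupp

section AlgebraicCompactness

variable {R W J : Type*} [CommRing R] [AddCommGroup W] [Module R W]

theorem Finsupp.linearCombination_congr {z z' : J → W} {c : J →₀ R}
    (h : ∀ j ∈ c.support, z j = z' j) :
    linearCombination R z c = linearCombination R z' c := by
  simp only [linearCombination_apply, Finsupp.sum]
  exact Finset.sum_congr rfl fun j hj => by rw [h j hj]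

theorem Finsupp.linearCombination_sub_left (z z' : J → W) (c : J →₀ R) :
    linearCombination R (z - z') c = linearCombination R z c - linearCombination R z' c := by
  rw [← bilinearCombination_apply R (S := R), map_sub, LinearMap.sub_apply]
  rfl

/-- An equation `∑ⱼ cⱼ zⱼ = b` in the unknowns `z : J → W` is encoded as the pair `(c, b)`. -/
def IsSolution (z : J → W) (E : Set ((J →₀ R) × W)) : Prop :=
  ∀ e ∈ E, linearCombination R z e.1 = e.2

def FinitelySolvable (E : Set ((J →₀ R) × W)) : Prop :=
  ∀ Γ : Finset ((J →₀ R) × W), ↑Γ ⊆ E → ∃ z : J → W, IsSolution z (Γ : Set ((J →₀ R) × W))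

noncomputable def homogeneousSolutions (E : Set ((J →₀ R) × W)) : Submodule R (J → W) :=
  ⨅ e ∈ E, LinearMap.ker ((bilinearCombination R R).flip e.1)

variable {E F : Set ((J →₀ R) × W)} {z h : J → W}

theorem mem_homogeneousSolutions :
    h ∈ homogeneousSolutions E ↔ ∀ e ∈ E, linearCombination R h e.1 = 0 := by
  simp [homogeneousSolutions]

theorem homogeneousSolutions_anti (hF : F ⊆ E) :
    homogeneousSolutions E ≤ homogeneousSolutions F :=
  biInf_mono hF

theorem IsSolution.mono (hz : IsSolution z E) (hF : F ⊆ E) : IsSolution z F :=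
  fun e he => hz e (hF he)

theorem IsSolution.sub_mem_homogeneousSolutions {z' : J → W} (hz : IsSolution z E)
    (hz' : IsSolution z' E) : z - z' ∈ homogeneousSolutions E :=
  mem_homogeneousSolutions.2 fun e he => by
    rw [linearCombination_sub_left, hz e he, hz' e he, sub_self]

theorem IsSolution.sub (hz : IsSolution z E) (hh : h ∈ homogeneousSolutions E) :
    IsSolution (z - h) E := fun e he => by
  rw [linearCombination_sub_left, hz e he, mem_homogeneousSolutions.1 hh e he, sub_zero]

/-- Choose `Γ₀` whose homogeneous solutions have a minimal set of `j`-th coordinates; then every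
finite `Γ` can be solved with the `j`-th coordinate of a solution of `Γ₀`. -/
theorem FinitelySolvable.exists_forall_apply_eq [IsArtinian R W] (hE : FinitelySolvable E)
    (j : J) : ∃ w : W, ∀ Γ : Finset ((J →₀ R) × W), ↑Γ ⊆ E →
      ∃ z, IsSolution z (Γ : Set ((J →₀ R) × W)) ∧ z j = w := by
  classical
  let U : Finset ((J →₀ R) × W) → Submodule R W := fun Γ =>
    (homogeneousSolutions (Γ : Set ((J →₀ R) × W))).map (LinearMap.proj j)
  obtain ⟨_, ⟨Γ₀, hΓ₀, rfl⟩, hmin⟩ :=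
    IsArtinian.set_has_minimal (U '' {Γ | ↑Γ ⊆ E}) ⟨U ∅, ∅, by simp, rfl⟩
  obtain ⟨z₀, hz₀⟩ := hE Γ₀ hΓ₀
  refine ⟨z₀ j, fun Γ hΓ => ?_⟩
  have hunion : ↑(Γ₀ ∪ Γ) ⊆ E := by simpa using And.intro hΓ₀ hΓ
  obtain ⟨z₁, hz₁⟩ := hE (Γ₀ ∪ Γ) hunion
  have hle : U (Γ₀ ∪ Γ) ≤ U Γ₀ :=
    Submodule.map_mono (homogeneousSolutions_anti (by simp))
  have heq : U (Γ₀ ∪ Γ) = U Γ₀ :=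
    by_contra fun hne => hmin _ ⟨_, hunion, rfl⟩ (lt_of_le_of_ne hle hne)
  have hdiff : z₁ j - z₀ j ∈ U (Γ₀ ∪ Γ) :=
    heq ▸ ⟨z₁ - z₀, (hz₁.mono (by simp)).sub_mem_homogeneousSolutions hz₀, rfl⟩
  obtain ⟨h, hh, hhj⟩ := hdiff
  refine ⟨z₁ - h, (hz₁.sub hh).mono (by simp), ?_⟩
  simp only [LinearMap.coe_proj, Function.eval] at hhj
  simp [hhj]

theorem FinitelySolvable.exists_maximal (hE : FinitelySolvable E) :
    ∃ F, E ⊆ F ∧ Maximal FinitelySolvable F :=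
  zorn_subset_nonempty {F | FinitelySolvable F} (fun c hc hchain hne =>
    ⟨⋃₀ c, fun Γ hΓ => by
      obtain ⟨F, hF, hΓF⟩ := hchain.directedOn.exists_mem_subset_of_finite_of_subset_sUnion hne
        Γ.finite_toSet hΓ
      exact hc hF Γ hΓF, fun _ => Set.subset_sUnion_of_mem⟩) E hE

/-- A maximal finitely solvable system contains an equation `zⱼ = wⱼ` for every unknown, and the
pinned values `w` solve it. -/
theorem IsArtinian.exists_isSolution [IsArtinian R W] (hE : FinitelySolvable E) :
    ∃ z : J → W, IsSolution z E := by
  classical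
  obtain ⟨F, hEF, hF⟩ := hE.exists_maximal
  choose w hw using FinitelySolvable.exists_forall_apply_eq hF.prop
  have hpin : ∀ j, (single j 1, w j) ∈ F := by
    refine fun j => hF.mem_of_prop_insert fun Γ hΓ => ?_
    obtain ⟨z, hz, hzj⟩ := hw j (Γ.erase (single j 1, w j)) (by
      rwa [Finset.coe_erase, Set.sdiff_subset_iff, ← Set.insert_eq])
    refine ⟨z, fun e he => ?_⟩
    by_cases hej : e = (single j 1, w j)
    · simp [hej, hzj]
    · exact hz e (by simpa [hej] using he)
  refine ⟨w, fun e he => ?_⟩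
  obtain ⟨z, hz⟩ := hF.prop (insert e (e.1.support.image fun j => (single j 1, w j))) (by
    rw [Finset.coe_insert, Finset.coe_image]
    exact Set.insert_subset (hEF he) (Set.image_subset_iff.2 fun j _ => hpin j))
  have hzw : ∀ j ∈ e.1.support, w j = z j := fun j hj => by
    simpa using (hz _ (Finset.mem_insert_of_mem (Finset.mem_image_of_mem _ hj))).symm
  rw [linearCombination_congr hzw]
  exact hz e (by simp)

theorem Finsupp.linearCombination_single_smul_add_sub {D : Type*} [AddCommGroup D] [Module R D]
    (z : D → W) (a : R) (x y : D) :
    linearCombination R z (single (a • x + y) 1 - single x a - single y 1) =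
      z (a • x + y) - (a • z x + z y) := by
  simp [sub_sub]

/-- The values `f x` are the unknowns of the linear system saying that `f` is linear with
`f x₀ = w₀`; each finite part of it lives in a single domain and is solved by the `gᵢ` there. -/
theorem IsArtinian.exists_linearMap_apply_eq [IsArtinian R W] {D ι : Type*} [AddCommGroup D]
    [Module R D] [Nonempty ι] (g : ι → D →ₗ.[R] W) (hdir : Directed (· ≤ ·) fun i => (g i).domain)
    (hcov : ∀ x, ∃ i, x ∈ (g i).domain) {x₀ : D} {w₀ : W}
    (hg : ∀ i, ∃ h : x₀ ∈ (g i).domain, g i ⟨x₀, h⟩ = w₀) :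
    ∃ f : D →ₗ[R] W, f x₀ = w₀ := by
  classical
  let A : ι → Set ((D →₀ R) × W) := fun i => insert (single x₀ 1, w₀)
    {e | ∃ a, ∃ x ∈ (g i).domain, ∃ y ∈ (g i).domain,
      e = (single (a • x + y) 1 - single x a - single y 1, 0)}
  have hA : Directed (· ⊆ ·) A := by
    have hmono : ∀ i j, (g i).domain ≤ (g j).domain → A i ⊆ A j := by
      rintro i j hij _ (rfl | ⟨a, x, hx, y, hy, rfl⟩)
      exacts [Set.mem_insert _ _, Or.inr ⟨a, x, hij hx, y, hij hy, rfl⟩]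
    intro i j
    obtain ⟨k, hik, hjk⟩ := hdir i j
    exact ⟨k, hmono i k hik, hmono j k hjk⟩
  have hsolv : FinitelySolvable (⋃ i, A i) := by
    intro Γ hΓ
    obtain ⟨i, hi⟩ := hA.exists_mem_subset_of_finset_subset_biUnion hΓ
    obtain ⟨hx₀, hgx₀⟩ := hg i
    refine ⟨fun x => if h : x ∈ (g i).domain then g i ⟨x, h⟩ else 0, fun e he => ?_⟩
    rcases hi he with rfl | ⟨a, x, hx, y, hy, rfl⟩
    · simp [hx₀, hgx₀]
    · have hxy : a • x + y ∈ (g i).domain := add_mem (Submodule.smul_mem _ a hx) hy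
      rw [linearCombination_single_smul_add_sub, sub_eq_zero]
      simp only [hx, hy, hxy, dif_pos]
      rw [← LinearPMap.map_smul, ← LinearPMap.map_add]
      rfl
  obtain ⟨z, hz⟩ := IsArtinian.exists_isSolution hsolv
  have hlin : ∀ (a : R) x y, z (a • x + y) = a • z x + z y := by
    intro a x y
    obtain ⟨i, hx⟩ := hcov x
    obtain ⟨j, hy⟩ := hcov y
    obtain ⟨k, hik, hjk⟩ := hdir i j
    have := hz _ (Set.mem_iUnion.2 ⟨k, Or.inr ⟨a, x, hik hx, y, hjk hy, rfl⟩⟩)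
    rwa [linearCombination_single_smul_add_sub, sub_eq_zero] at this
  have hzero : z 0 = 0 := by simpa using hlin 1 0 0
  refine ⟨{ toFun := z
            map_add' := fun x y => by simpa using hlin 1 x y
            map_smul' := fun a x => by simpa [hzero] using hlin a x 0 }, ?_⟩
  simpa using hz _ (Set.mem_iUnion.2 ⟨Classical.arbitrary ι, Set.mem_insert _ _⟩)

end AlgebraicCompactness

section Localization

variable {R M : Type*} [CommRing R] [AddCommGroup M] [Module R M]

theorem IsArtinian.exists_ne_bot_forall_exists_smul_eq [IsArtinian R M] (S : Submonoid R)
    (hS : ∀ s ∈ S, s ∉ Module.annihilator R M) :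
    ∃ N : Submodule R M, N ≠ ⊥ ∧ ∀ s ∈ S, ∀ n ∈ N, ∃ n' ∈ N, s • n' = n := by
  let D : R → Submodule R M := fun s => LinearMap.range (LinearMap.lsmul R M s)
  obtain ⟨_, ⟨c, hc, rfl⟩, hmin⟩ :=
    IsArtinian.set_has_minimal (D '' S) ⟨D 1, 1, S.one_mem, rfl⟩
  refine ⟨D c, fun hbot => hS c hc ?_, fun s hs n hn => ?_⟩
  · refine Module.mem_annihilator.2 fun m => ?_
    have : c • m ∈ D c := ⟨m, rfl⟩
    simpa [hbot] using this
  · have hle : D (s * c) ≤ D c := by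
      rintro _ ⟨m, rfl⟩
      exact ⟨s • m, by simp [mul_smul]⟩
    have heq : D (s * c) = D c :=
      by_contra fun hne => hmin _ ⟨_, S.mul_mem hs hc, rfl⟩ (lt_of_le_of_ne hle hne)
    obtain ⟨m, rfl⟩ := heq ▸ hn
    exact ⟨c • m, ⟨m, rfl⟩, by simp [mul_smul]⟩

variable (S : Submonoid R) (A : Type*) [CommRing A] [Algebra R A] [IsLocalization S A]

theorem IsLocalization.notMem_annihilator_of_linearMap_ne_zero {f : A →ₗ[R] M} (hf : f ≠ 0) :
    ∀ s ∈ S, s ∉ Module.annihilator R M := by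
  intro s hs hsM
  refine hf (LinearMap.ext fun x => ?_)
  have hx : x = s • (IsLocalization.mk' A 1 ⟨s, hs⟩ * x) := by
    rw [← smul_mul_assoc, IsLocalization.smul_mk'_one, IsLocalization.mk'_self, one_mul]
  rw [hx, map_smul, Module.mem_annihilator.1 hsM, LinearMap.zero_apply]

/-- In the `S`-divisible part `N` of `M` pick `n₀ ≠ 0` and an `s`-th root `ξₛ` of `n₀`
in `N` for each `s ∈ S`; then `r/s ↦ r ξₛ` is well defined on `R·(1/s)`, and algebraic compactness
glues these incompatible partial maps into a map `A → M` with `1 ↦ n₀`. -/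
theorem IsArtinian.exists_linearMap_ne_zero_of_isLocalization [IsArtinian R M]
    (hS : ∀ s ∈ S, s ∉ Module.annihilator R M) : ∃ f : A →ₗ[R] M, f ≠ 0 := by
  obtain ⟨N, hN, hdiv⟩ := IsArtinian.exists_ne_bot_forall_exists_smul_eq S hS
  obtain ⟨n₀, hn₀N, hn₀⟩ := N.ne_bot_iff.1 hN
  choose ξ hξN hξ using fun u : S => hdiv u u.2 n₀ hn₀N
  have htors : ∀ (u : S) (c : R), c • IsLocalization.mk' A (1 : R) u = 0 → c • ξ u = 0 := by
    intro u c hc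
    rw [IsLocalization.smul_mk'_one, IsLocalization.mk'_eq_zero_iff] at hc
    obtain ⟨v, hv⟩ := hc
    obtain ⟨η, -, hη⟩ := hdiv v v.2 (ξ u) (hξN u)
    rw [← hη, smul_smul, mul_comm, hv, zero_smul]
  let g : S → A →ₗ.[R] M := fun u =>
    LinearPMap.mkSpanSingleton' (IsLocalization.mk' A (1 : R) u) (ξ u) (htors u)
  have hmem : ∀ u v : S, IsLocalization.mk' A (1 : R) u ∈ (g (u * v)).domain := by
    intro u v
    refine Submodule.mem_span_singleton.2 ⟨v, ?_⟩
    rw [IsLocalization.smul_mk'_one, ← one_mul (v : R), IsLocalization.mk'_cancel]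
  have hdir : Directed (· ≤ ·) fun u => (g u).domain := by
    intro u v
    refine ⟨u * v, Submodule.span_le.2 ?_, Submodule.span_le.2 ?_⟩
    · simpa using hmem u v
    · simpa [mul_comm u v] using hmem v u
  have hcov : ∀ x : A, ∃ u, x ∈ (g u).domain := by
    intro x
    obtain ⟨⟨r, u⟩, rfl⟩ := IsLocalization.mk'_surjective S x
    exact ⟨u, Submodule.mem_span_singleton.2 ⟨r, IsLocalization.smul_mk'_one _ _⟩⟩
  have hg : ∀ u, ∃ h : (1 : A) ∈ (g u).domain, g u ⟨1, h⟩ = n₀ := by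
    intro u
    have hone : (u : R) • IsLocalization.mk' A (1 : R) u = 1 := by
      rw [IsLocalization.smul_mk'_one, IsLocalization.mk'_self']
    refine ⟨hone ▸ Submodule.smul_mem _ _ (Submodule.mem_span_singleton_self _), ?_⟩
    simp_rw [← hone]
    rw [LinearPMap.mkSpanSingleton'_apply, RingHom.id_apply, hξ]
  obtain ⟨f, hf⟩ := IsArtinian.exists_linearMap_apply_eq g hdir hcov hg
  exact ⟨f, fun h => hn₀ (by rw [← hf, h, LinearMap.zero_apply])⟩

theorem IsArtinian.exists_linearMap_ne_zero_iff_of_isLocalization [IsArtinian R M] :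
    (∃ f : A →ₗ[R] M, f ≠ 0) ↔ ∀ s ∈ S, s ∉ Module.annihilator R M :=
  ⟨fun ⟨_, hf⟩ => IsLocalization.notMem_annihilator_of_linearMap_ne_zero S A hf,
    IsArtinian.exists_linearMap_ne_zero_of_isLocalization S A⟩

end Localization

theorem mem_cosupport_iff_annihilator_le {R M : Type u} [CommRing R] [AddCommGroup M]
    [Module R M] [IsArtinian R M] {p : PrimeSpectrum R} :
    p ∈ cosupport R M ↔ Module.annihilator R M ≤ p.asIdeal := by
  rw [cosupport, Set.mem_ofPred_eq,
    IsArtinian.exists_linearMap_ne_zero_iff_of_isLocalization p.asIdeal.primeCompl]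
  exact ⟨fun h r hr => not_not.1 fun hrp => h r hrp hr, fun h r hrp hr => hrp (h hr)⟩

/-- For a commutative ring `R` and an Artinian `R`-module `M`:
`Ann_R(0 :_M p) = p` for every prime `p ⊇ Ann_R M` iff
`Cos_R(0 :_M I) = Cos_R M ∩ V(I)` for every ideal `I`. -/
theorem statement7 (R : Type u) [CommRing R]
    (M : Type u) [AddCommGroup M] [Module R M] [IsArtinian R M] :
    (∀ p : Ideal R, p.IsPrime → (⊤ : Submodule R M).annihilator ≤ p →
        (Submodule.torsionBySet R M (p : Set R)).annihilator = p) ↔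
      (∀ I : Ideal R,
        cosupport R (Submodule.torsionBySet R M (I : Set R)) =
          cosupport R M ∩ PrimeSpectrum.zeroLocus (I : Set R)) := by
  have hM : ∀ N : Submodule R M, (⊤ : Submodule R M).annihilator ≤ N.annihilator :=
    fun N => Submodule.annihilator_mono le_top
  have hI : ∀ I : Ideal R, I ≤ (Submodule.torsionBySet R M I).annihilator :=
    fun I => (Submodule.torsion_gc R M _ _).2 le_rfl
  simp only [← Submodule.annihilator_top (M := M), Set.ext_iff, Set.mem_inter_iff,
    PrimeSpectrum.mem_zeroLocus, SetLike.coe_subset_coe, mem_cosupport_iff_annihilator_le]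
  constructor
  · intro hyp I p
    refine ⟨fun h => ⟨(hM _).trans h, (hI I).trans h⟩, fun ⟨hMp, hIp⟩ => ?_⟩
    rw [← hyp p.asIdeal p.isPrime hMp]
    exact Submodule.annihilator_mono (Submodule.torsionBySet_le_torsionBySet_of_subset hIp)
  · intro hyp p hp hMp
    exact le_antisymm ((hyp p ⟨p, hp⟩).2 ⟨hMp, le_rfl⟩) (hI p)
end
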